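/- Let α ∈ [0, 1), γ := √(α/(1−α)), and θ ≥ 0. Let P̂ be a probability measure on ℝ with finite second moment, mean μ̂ and standard deviation σ̂. Let P be a probability measure on ℝ with finite second moment such that there exists a coupling ψ of P and P̂ with ∫_{ℝ×ℝ} (x − y)² dψ(x, y) ≤ θ². Then CVaR_α(P) ≤ μ̂ + γσ̂ + θ√(1 + γ²), where CVaR_α(P) := inf over z ∈ ℝ of ( z + (1/(1−α)) ∫ max(x − z, 0) dP(x) ). -/

import Mathlib

/-! For each threshold `z`, writing `(x - z)⁺ = ((x - z) + |x - z|) / 2` and bounding `E|X - z|`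
by the second moment about `z` gives `CVaR_α(P) ≤ μ + √(α / (1 - α)) σ` after optimising in `z`.
Mean and standard deviation are jointly controlled by a coupling: `E(X - Y)² = (μ - μ̂)² + Var(X - Y)`,
and `Var(X - Y) ≥ (σ - σ̂)²` by Cauchy–Schwarz for the covariance. Cauchy–Schwarz in `ℝ²` then
bounds `(μ - μ̂) + γ (σ - σ̂)` by `θ √(1 + γ²)`. -/

open MeasureTheory

noncomputable def cvar (α : ℝ) (P : MeasureTheory.Measure ℝ) : ℝ :=
  ⨅ z : ℝ, (z + (1 / (1 - α)) * ∫ x, max (x - z) 0 ∂P)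

namespace ProbabilityTheory

variable {Ω : Type*} {mΩ : MeasurableSpace Ω} {μ : Measure Ω} {X Y : Ω → ℝ}

lemma abs_covariance_le_sqrt_variance_mul [IsFiniteMeasure μ] (hX : MemLp X 2 μ)
    (hY : MemLp Y 2 μ) : |cov[X, Y; μ]| ≤ √Var[X; μ] * √Var[Y; μ] := by
  have hX' : MemLp (fun ω ↦ |X ω - μ[X]|) (ENNReal.ofReal 2) μ := by
    rw [ENNReal.ofReal_ofNat]; exact (hX.sub (memLp_const μ[X])).abs
  have hY' : MemLp (fun ω ↦ |Y ω - μ[Y]|) (ENNReal.ofReal 2) μ := by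
    rw [ENNReal.ofReal_ofNat]; exact (hY.sub (memLp_const μ[Y])).abs
  have holder := integral_mul_le_Lp_mul_Lq_of_nonneg Real.HolderConjugate.two_two
    (ae_of_all _ fun ω ↦ abs_nonneg _) (ae_of_all _ fun ω ↦ abs_nonneg _) hX' hY'
  simp only [Real.rpow_two, sq_abs, ← Real.sqrt_eq_rpow] at holder
  rw [variance_eq_integral hX.aemeasurable, variance_eq_integral hY.aemeasurable]
  calc |cov[X, Y; μ]| ≤ ∫ ω, |(X ω - μ[X]) * (Y ω - μ[Y])| ∂μ :=
        abs_integral_le_integral_abs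
    _ ≤ _ := by simpa only [abs_mul] using holder

lemma sq_sqrt_variance_sub_le_variance_sub [IsFiniteMeasure μ] (hX : MemLp X 2 μ)
    (hY : MemLp Y 2 μ) : (√Var[X; μ] - √Var[Y; μ]) ^ 2 ≤ Var[X - Y; μ] := by
  have hcov := (le_abs_self _).trans (abs_covariance_le_sqrt_variance_mul hX hY)
  rw [variance_sub hX hY, sub_sq, Real.sq_sqrt (variance_nonneg _ _),
    Real.sq_sqrt (variance_nonneg _ _)]
  linarith

lemma sq_integral_sub_add_sq_sqrt_variance_sub_le [IsProbabilityMeasure μ] (hX : MemLp X 2 μ)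
    (hY : MemLp Y 2 μ) :
    (μ[X] - μ[Y]) ^ 2 + (√Var[X; μ] - √Var[Y; μ]) ^ 2 ≤ ∫ ω, (X ω - Y ω) ^ 2 ∂μ := by
  have hvar := variance_eq_sub (hX.sub hY)
  simp only [Pi.pow_apply, Pi.sub_apply] at hvar
  rw [integral_sub (hX.integrable one_le_two) (hY.integrable one_le_two)] at hvar
  linarith [sq_sqrt_variance_sub_le_variance_sub hX hY]

lemma integral_abs_le_sqrt_integral_sq [IsProbabilityMeasure μ] (hX : MemLp X 2 μ) :
    ∫ ω, |X ω| ∂μ ≤ √(∫ ω, X ω ^ 2 ∂μ) := by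
  have hvar := variance_eq_sub hX.abs
  simp only [Pi.pow_apply, Pi.abs_apply, sq_abs] at hvar
  refine Real.le_sqrt_of_sq_le ?_
  linarith [variance_nonneg |X| μ]

lemma integral_max_sub_zero_le [IsProbabilityMeasure μ] (hX : MemLp X 2 μ) (z : ℝ) :
    ∫ ω, max (X ω - z) 0 ∂μ ≤ (μ[X] - z + √(Var[X; μ] + (μ[X] - z) ^ 2)) / 2 := by
  have hXz : MemLp (fun ω ↦ X ω - z) 2 μ := hX.sub (memLp_const z)
  have hmean : ∫ ω, (X ω - z) ∂μ = μ[X] - z := by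
    simp [integral_sub (hX.integrable one_le_two) (integrable_const z)]
  have hsecond : ∫ ω, (X ω - z) ^ 2 ∂μ = Var[X; μ] + (μ[X] - z) ^ 2 := by
    have := variance_eq_sub hXz
    rw [variance_sub_const hX.aestronglyMeasurable, hmean] at this
    simp only [Pi.pow_apply] at this
    linarith
  have hmax : ∀ u : ℝ, max u 0 = (u + |u|) / 2 := fun u ↦ by
    rcases le_total 0 u with h | h
    · rw [max_eq_left h, abs_of_nonneg h]; ring
    · rw [max_eq_right h, abs_of_nonpos h]; ring
  simp_rw [hmax]
  rw [integral_div, integral_add (hXz.integrable one_le_two) (hXz.integrable one_le_two).abs,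
    hmean, ← hsecond]
  gcongr
  exact integral_abs_le_sqrt_integral_sq hXz

lemma sq_integral_sub_add_sq_sqrt_variance_sub_le_of_coupling {ψ : Measure (ℝ × ℝ)}
    [IsProbabilityMeasure ψ] {P Q : Measure ℝ} (hP : ψ.map Prod.fst = P)
    (hQ : ψ.map Prod.snd = Q) (hPL : MemLp id 2 P) (hQL : MemLp id 2 Q) :
    (∫ x, x ∂P - ∫ x, x ∂Q) ^ 2 + (√Var[id; P] - √Var[id; Q]) ^ 2 ≤
      ∫ z, (z.1 - z.2) ^ 2 ∂ψ := by
  subst hP hQ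
  rw [memLp_map_measure_iff aestronglyMeasurable_id measurable_fst.aemeasurable] at hPL
  rw [memLp_map_measure_iff aestronglyMeasurable_id measurable_snd.aemeasurable] at hQL
  rw [variance_id_map measurable_fst.aemeasurable, variance_id_map measurable_snd.aemeasurable,
    integral_map (f := fun x ↦ x) measurable_fst.aemeasurable aestronglyMeasurable_id,
    integral_map (f := fun x ↦ x) measurable_snd.aemeasurable aestronglyMeasurable_id]
  exact sq_integral_sub_add_sq_sqrt_variance_sub_le hPL hQL

end ProbabilityTheory

open ProbabilityTheory

-- The infimum over `s` is `√(k - 1) * σ`: attained when `k > 1`, only approached as `s → ∞`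
-- when `k = 1`.
lemma exists_neg_add_mul_add_sqrt_le {k σ ε : ℝ} (hk : 1 ≤ k) (hσ : 0 ≤ σ) (hε : 0 < ε) :
    ∃ s : ℝ, -s + k * (s + √(σ ^ 2 + s ^ 2)) / 2 ≤ √(k - 1) * σ + ε := by
  rcases hk.eq_or_lt with rfl | hk
  · refine ⟨σ ^ 2 / (4 * ε), ?_⟩
    have hroot : √(σ ^ 2 + (σ ^ 2 / (4 * ε)) ^ 2) ≤ σ ^ 2 / (4 * ε) + 2 * ε := by
      rw [Real.sqrt_le_left (by positivity)]
      field_simp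
      nlinarith [sq_nonneg σ]
    simp only [sub_self, Real.sqrt_zero, zero_mul, zero_add]
    linarith
  · have hr : 0 < √(k - 1) := Real.sqrt_pos.mpr (by linarith)
    have hr2 : √(k - 1) ^ 2 = k - 1 := Real.sq_sqrt (by linarith)
    refine ⟨(2 - k) * σ / (2 * √(k - 1)), le_of_eq_of_le ?_ (le_add_of_nonneg_right hε.le)⟩
    have hroot : √(σ ^ 2 + ((2 - k) * σ / (2 * √(k - 1))) ^ 2) = k * σ / (2 * √(k - 1)) := by
      rw [← Real.sqrt_sq (by positivity : 0 ≤ k * σ / (2 * √(k - 1)))]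
      congr 1
      field_simp
      rw [hr2]
      ring
    rw [hroot]
    field_simp
    rw [hr2]
    ring

section CVaR

variable {α : ℝ} {P : Measure ℝ} [IsProbabilityMeasure P]

lemma cvar_le (hα0 : 0 ≤ α) (hα1 : α < 1) (hP : Integrable (fun x ↦ x) P) (z : ℝ) :
    cvar α P ≤ z + (1 / (1 - α)) * ∫ x, max (x - z) 0 ∂P := by
  refine ciInf_le ⟨∫ x, x ∂P, ?_⟩ z
  rintro _ ⟨y, rfl⟩
  have hmean : ∫ x, x ∂P - y ≤ ∫ x, max (x - y) 0 ∂P :=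
    calc ∫ x, x ∂P - y = ∫ x, (x - y) ∂P := by
          rw [integral_sub hP (integrable_const y)]; simp
      _ ≤ ∫ x, max (x - y) 0 ∂P := integral_mono (hP.sub (integrable_const y))
          (hP.sub (integrable_const y)).pos_part fun x ↦ le_max_left _ _
  have hk : 1 ≤ 1 / (1 - α) := by rw [le_div_iff₀ (by linarith)]; linarith
  have hpos : 0 ≤ ∫ x, max (x - y) 0 ∂P := integral_nonneg fun x ↦ le_max_right _ _
  linarith [le_mul_of_one_le_left hpos hk]

lemma cvar_le_integral_add_mul_sqrt_variance (hα0 : 0 ≤ α) (hα1 : α < 1) (hP : MemLp id 2 P) :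
    cvar α P ≤ ∫ x, x ∂P + √(α / (1 - α)) * √Var[id; P] := by
  refine le_of_forall_pos_le_add fun ε hε ↦ ?_
  have h1α : 0 < 1 - α := by linarith
  set k := 1 / (1 - α) with hk_def
  have hk : 1 ≤ k := by rw [hk_def, le_div_iff₀ h1α]; linarith
  have hk1 : k - 1 = α / (1 - α) := by rw [hk_def]; field_simp; ring
  set m := ∫ x, x ∂P
  set σ := √Var[id; P]
  obtain ⟨s, hs⟩ := exists_neg_add_mul_add_sqrt_le hk (Real.sqrt_nonneg Var[id; P]) hε
  calc cvar α P ≤ m - s + k * ∫ x, max (x - (m - s)) 0 ∂P :=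
        cvar_le hα0 hα1 (hP.integrable one_le_two) _
    _ ≤ m - s + k * ((m - (m - s) + √(Var[id; P] + (m - (m - s)) ^ 2)) / 2) := by
        gcongr
        exact integral_max_sub_zero_le hP (m - s)
    _ = m + (-s + k * (s + √(σ ^ 2 + s ^ 2)) / 2) := by
        rw [Real.sq_sqrt (variance_nonneg _ _)]; ring_nf
    _ ≤ m + (√(k - 1) * σ + ε) := by gcongr
    _ = m + √(α / (1 - α)) * σ + ε := by rw [hk1]; ring

end CVaR

lemma add_mul_le_sqrt_one_add_sq_mul_sqrt (a b γ : ℝ) :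
    a + γ * b ≤ √(1 + γ ^ 2) * √(a ^ 2 + b ^ 2) := by
  rw [← Real.sqrt_mul (by positivity)]
  exact (le_abs_self _).trans (Real.abs_le_sqrt (by nlinarith [sq_nonneg (γ * a - b)]))

theorem dr_cvar_upper_bound_general
    (α : ℝ) (hα : α ∈ Set.Ico (0 : ℝ) 1)
    (γ : ℝ) (hγ : γ = Real.sqrt (α / (1 - α)))
    (θ : ℝ) (hθ : 0 ≤ θ)
    (Phat : Measure ℝ)
    (hPhat2 : Integrable (fun x => x ^ 2) Phat)
    (μh σh : ℝ) (hμh : μh = ∫ x, x ∂Phat)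
    (hσh : σh = Real.sqrt (∫ x, (x - μh) ^ 2 ∂Phat))
    (P : Measure ℝ) [IsProbabilityMeasure P]
    (hP2 : Integrable (fun x => x ^ 2) P)
    (hW : ∃ ψ : Measure (ℝ × ℝ), IsProbabilityMeasure ψ ∧
      ψ.map Prod.fst = P ∧ ψ.map Prod.snd = Phat ∧
      (∫ z, (z.1 - z.2) ^ 2 ∂ψ) ≤ θ ^ 2) :
    cvar α P ≤ μh + γ * σh + θ * Real.sqrt (1 + γ ^ 2) := by
  obtain ⟨hα0, hα1⟩ := hα
  obtain ⟨ψ, hψ, hfst, hsnd, hcost⟩ := hW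
  have hPL : MemLp id 2 P := (memLp_two_iff_integrable_sq aestronglyMeasurable_id).2 hP2
  have hPhatL : MemLp id 2 Phat := (memLp_two_iff_integrable_sq aestronglyMeasurable_id).2 hPhat2
  have hσ : σh = √Var[id; Phat] := by
    rw [hσh, hμh, variance_eq_integral aemeasurable_id]; rfl
  have hgap := sq_integral_sub_add_sq_sqrt_variance_sub_le_of_coupling hfst hsnd hPL hPhatL
  have hcvar := cvar_le_integral_add_mul_sqrt_variance hα0 hα1 hPL
  rw [← hγ] at hcvar
  rw [← hμh, ← hσ] at hgap
  calc cvar α P ≤ ∫ x, x ∂P + γ * √Var[id; P] := hcvar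
    _ = μh + γ * σh + ((∫ x, x ∂P - μh) + γ * (√Var[id; P] - σh)) := by ring
    _ ≤ μh + γ * σh + √(1 + γ ^ 2) * √((∫ x, x ∂P - μh) ^ 2 + (√Var[id; P] - σh) ^ 2) := by
        gcongr
        exact add_mul_le_sqrt_one_add_sq_mul_sqrt _ _ _
    _ ≤ μh + γ * σh + √(1 + γ ^ 2) * θ := by
        gcongr
        exact (Real.sqrt_le_left hθ).2 (hgap.trans hcost)
    _ = μh + γ * σh + θ * √(1 + γ ^ 2) := by ring

/-- Theorem 1 of the paper: if `P` lies in the 2-Wasserstein ball of radius `θ` around a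
nominal distribution `P̂` with mean `μ̂` and standard deviation `σ̂` (i.e. some coupling
`ψ` of `P` and `P̂` has `∫ (x − y)² dψ ≤ θ²`), then for `α ∈ [0, 1)` and
`γ = √(α/(1−α))`, `CVaR_α(P) ≤ μ̂ + γσ̂ + θ√(1 + γ²)`. -/
theorem dr_cvar_upper_bound
    (α : ℝ) (hα : α ∈ Set.Ico (0 : ℝ) 1)
    (γ : ℝ) (hγ : γ = Real.sqrt (α / (1 - α)))
    (θ : ℝ) (hθ : 0 ≤ θ)
    (Phat : Measure ℝ) [IsProbabilityMeasure Phat]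
    (hPhat2 : Integrable (fun x => x ^ 2) Phat)
    (μh σh : ℝ) (hμh : μh = ∫ x, x ∂Phat)
    (hσh : σh = Real.sqrt (∫ x, (x - μh) ^ 2 ∂Phat))
    (P : Measure ℝ) [IsProbabilityMeasure P]
    (hP2 : Integrable (fun x => x ^ 2) P)
    (hW : ∃ ψ : Measure (ℝ × ℝ), IsProbabilityMeasure ψ ∧
      ψ.map Prod.fst = P ∧ ψ.map Prod.snd = Phat ∧
      (∫ z, (z.1 - z.2) ^ 2 ∂ψ) ≤ θ ^ 2) :
    cvar α P ≤ μh + γ * σh + θ * Real.sqrt (1 + γ ^ 2) :=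
  dr_cvar_upper_bound_general α hα γ hγ θ hθ Phat hPhat2 μh σh hμh hσh P hP2 hW
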